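/- The limit κ = lim_{m,n→∞} σ(Z_{m×n})^{1/(mn)} exists and equals sup_{m,n≥1} σ(Z_{m×n})^{1/((m+1)(n+1))}. -/

import Mathlib

/-!
The count `σ(m, n)` is supermultiplicative in each coordinate: two grids glued along an empty
separating row (or column) carry the union of their maximal independent sets, which extends to
a maximal independent set of the glued grid. Hence the `m × n` grid is tiled by
`⌊(m + 1) / (m₀ + 1)⌋ ⌊(n + 1) / (n₀ + 1)⌋` copies of the `m₀ × n₀` grid, and with the rate
`r(m, n) = σ(m, n) ^ (1 / ((m + 1) (n + 1)))` this gives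
`r(m₀, n₀) ^ ((m - m₀) (n - n₀) / (m n)) ≤ σ(m, n) ^ (1 / (m n))`. Conversely
`σ(m, n) ^ (1 / (m n)) = r(m, n) ^ ((m + 1) (n + 1) / (m n)) ≤ (sup r) ^ ((m + 1) (n + 1) / (m n))`.
Both exponents tend to `1`.
-/

/-- The m×n grid graph on {0,...,m-1}×{0,...,n-1}: edges between points at distance 1. -/
def gridGraph (m n : ℕ) : SimpleGraph (Fin m × Fin n) :=
  SimpleGraph.fromRel (fun u v =>
    (u.1 = v.1 ∧ u.2.1 + 1 = v.2.1) ∨ (u.2 = v.2 ∧ u.1.1 + 1 = v.1.1))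

/-- S is a maximal independent set: independent, and every vertex outside S has a neighbor in S. -/
def IsMaxIndep {V : Type*} (G : SimpleGraph V) (S : Set V) : Prop :=
  (∀ u ∈ S, ∀ v ∈ S, ¬ G.Adj u v) ∧ ∀ v ∉ S, ∃ u ∈ S, G.Adj v u

/-- The number of maximal independent sets of G. -/
noncomputable def numMIS {V : Type*} (G : SimpleGraph V) : ℕ :=
  Nat.card {S : Set V // IsMaxIndep G S}

open Filter Topology

section MaximalIndependentSets

variable {V W : Type*} {G : SimpleGraph V} {H : SimpleGraph W} {S T : Set V}

theorem isMaxIndep_iff_maximal_isIndepSet : IsMaxIndep G S ↔ Maximal G.IsIndepSet S := by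
  constructor
  · rintro ⟨hind, hdom⟩
    refine ⟨fun u hu v hv _ => hind u hu v hv, fun T hT hST v hv => ?_⟩
    by_contra hvS
    obtain ⟨u, hu, hadj⟩ := hdom v hvS
    exact hT hv (hST hu) hadj.ne hadj
  · intro h
    refine ⟨fun u hu v hv hadj => h.prop hu hv hadj.ne hadj, fun v hv => ?_⟩
    by_contra! hnadj
    refine hv (h.mem_of_prop_insert (h.prop.insert fun u hu _ => ⟨hnadj u hu, ?_⟩))
    exact fun hadj => hnadj u hu hadj.symm

theorem exists_isMaxIndep_superset [Finite V] (hS : G.IsIndepSet S) :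
    ∃ T, S ⊆ T ∧ IsMaxIndep G T := by
  simp_rw [isMaxIndep_iff_maximal_isIndepSet]
  exact Finite.exists_le_maximal hS

theorem one_le_numMIS [Finite V] (G : SimpleGraph V) : 1 ≤ numMIS G := by
  obtain ⟨T, -, hT⟩ := exists_isMaxIndep_superset (G := G) (Set.pairwise_empty _)
  have : Nonempty {S : Set V // IsMaxIndep G S} := ⟨⟨T, hT⟩⟩
  exact Nat.card_pos

theorem numMIS_le_two_pow [Finite V] (G : SimpleGraph V) : numMIS G ≤ 2 ^ Nat.card V := by
  have := Fintype.ofFinite V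
  calc numMIS G ≤ Nat.card (Set V) := Nat.card_le_card_of_injective _ Subtype.val_injective
    _ = 2 ^ Nat.card V := by simp [Nat.card_eq_fintype_card, Fintype.card_set]

theorem IsMaxIndep.preimage_eq {S : Set W} (hS : IsMaxIndep H S) (f : H ↪g G)
    (hT : G.IsIndepSet T) (hST : f '' S ⊆ T) : f ⁻¹' T = S := by
  refine subset_antisymm (fun v hv => ?_) (Set.image_subset_iff.mp hST)
  by_contra hvS
  obtain ⟨u, hu, hadj⟩ := hS.2 v hvS
  exact hT hv (hST ⟨u, hu, rfl⟩) (f.map_adj_iff.mpr hadj).ne (f.map_adj_iff.mpr hadj)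

-- Send a pair to a maximal independent extension `T` of the union of the images; each factor
-- is recovered from `T` as a preimage, so this is injective.
theorem numMIS_mul_le_of_embeddings [Finite V] {W₁ W₂ : Type*} {H₁ : SimpleGraph W₁}
    {H₂ : SimpleGraph W₂} (f₁ : H₁ ↪g G) (f₂ : H₂ ↪g G) (hf : ∀ a b, ¬G.Adj (f₁ a) (f₂ b)) :
    numMIS H₁ * numMIS H₂ ≤ numMIS G := by
  have hext (S : {S // IsMaxIndep H₁ S} × {S // IsMaxIndep H₂ S}) :
      ∃ T, f₁ '' S.1 ∪ f₂ '' S.2 ⊆ T ∧ IsMaxIndep G T := by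
    refine exists_isMaxIndep_superset ?_
    rintro _ (⟨a, ha, rfl⟩ | ⟨a, ha, rfl⟩) _ (⟨b, hb, rfl⟩ | ⟨b, hb, rfl⟩) -
    · exact f₁.map_adj_iff.not.mpr (S.1.2.1 a ha b hb)
    · exact hf a b
    · exact fun h => hf b a h.symm
    · exact f₂.map_adj_iff.not.mpr (S.2.2.1 a ha b hb)
  choose T hST hT using hext
  rw [numMIS, numMIS, numMIS, ← Nat.card_prod]
  refine Nat.card_le_card_of_injective (fun S => ⟨T S, hT S⟩) fun S S' h => ?_
  have hTT : T S = T S' := congrArg Subtype.val h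
  have h₁ (S) : f₁ ⁻¹' T S = S.1 :=
    S.1.2.preimage_eq f₁ (isMaxIndep_iff_maximal_isIndepSet.mp (hT S)).prop
      (Set.subset_union_left.trans (hST S))
  have h₂ (S) : f₂ ⁻¹' T S = S.2 :=
    S.2.2.preimage_eq f₂ (isMaxIndep_iff_maximal_isIndepSet.mp (hT S)).prop
      (Set.subset_union_right.trans (hST S))
  ext1
  · exact Subtype.ext ((h₁ S).symm.trans (hTT ▸ h₁ S'))
  · exact Subtype.ext ((h₂ S).symm.trans (hTT ▸ h₂ S'))

end MaximalIndependentSets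

theorem gridGraph_adj {m n : ℕ} {u v : Fin m × Fin n} :
    (gridGraph m n).Adj u v ↔
      (u.1.1 = v.1.1 ∧ (u.2.1 + 1 = v.2.1 ∨ v.2.1 + 1 = u.2.1)) ∨
      (u.2.1 = v.2.1 ∧ (u.1.1 + 1 = v.1.1 ∨ v.1.1 + 1 = u.1.1)) := by
  simp only [gridGraph, SimpleGraph.fromRel_adj, ne_eq, Prod.ext_iff, Fin.ext_iff, not_and]
  omega

def gridTranslate {m n M N : ℕ} (a b : ℕ) (hm : m + a ≤ M) (hn : n + b ≤ N) :
    gridGraph m n ↪g gridGraph M N where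
  toFun := Prod.map (fun i => Fin.castLE hm (i.addNat a)) (fun j => Fin.castLE hn (j.addNat b))
  inj' p q h := by
    simp only [Prod.map, Prod.ext_iff, Fin.ext_iff, Fin.val_castLE, Fin.val_addNat] at h ⊢
    omega
  map_rel_iff' {p q} := by
    dsimp only [DFunLike.coe]
    simp only [gridGraph_adj, Prod.map, Fin.val_castLE, Fin.val_addNat]
    omega

theorem numMIS_gridGraph_mul_le_rows (m₁ m₂ n : ℕ) :
    numMIS (gridGraph m₁ n) * numMIS (gridGraph m₂ n) ≤ numMIS (gridGraph (m₁ + m₂ + 1) n) :=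
  numMIS_mul_le_of_embeddings (gridTranslate 0 0 (by omega) le_rfl)
    (gridTranslate (m₁ + 1) 0 (by omega) le_rfl) fun a b => by
      dsimp only [gridTranslate, DFunLike.coe]
      simp only [gridGraph_adj, Prod.map, Fin.val_castLE, Fin.val_addNat]
      omega

theorem numMIS_gridGraph_mul_le_cols (m n₁ n₂ : ℕ) :
    numMIS (gridGraph m n₁) * numMIS (gridGraph m n₂) ≤ numMIS (gridGraph m (n₁ + n₂ + 1)) :=
  numMIS_mul_le_of_embeddings (gridTranslate 0 0 le_rfl (by omega))
    (gridTranslate 0 (n₁ + 1) le_rfl (by omega)) fun a b => by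
      dsimp only [gridTranslate, DFunLike.coe]
      simp only [gridGraph_adj, Prod.map, Fin.val_castLE, Fin.val_addNat]
      omega

theorem tendsto_natCast_add_mul_natCast_add_div_mul (c d : ℝ) :
    Tendsto (fun p : ℕ × ℕ => (p.1 + c) * (p.2 + d) / (p.1 * p.2)) (atTop ×ˢ atTop) (𝓝 1) := by
  have h (c : ℝ) : Tendsto (fun k : ℕ => (k + c) / k) atTop (𝓝 1) := by
    simpa [add_comm] using tendsto_add_mul_div_add_mul_atTop_nhds c 0 1 one_ne_zero
  simpa only [mul_div_mul_comm, Function.comp_apply, mul_one] using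
    ((h c).comp tendsto_fst).mul ((h d).comp tendsto_snd)

theorem sub_lt_add_one_div_add_one_mul (m m₀ : ℕ) :
    (m : ℝ) - m₀ < ((m + 1) / (m₀ + 1) : ℕ) * (m₀ + 1) := by
  have h : ((m + 1 : ℕ) : ℝ) < ((m + 1) / (m₀ + 1) * (m₀ + 1) + (m₀ + 1) : ℕ) :=
    Nat.cast_lt.mpr (Nat.lt_div_mul_add (by omega))
  push_cast at h
  linarith

structure IsGridSupermultiplicative (s : ℕ → ℕ → ℝ) : Prop where
  one_le : ∀ m n, 1 ≤ s m n
  mul_le_rows : ∀ m₁ m₂ n, s m₁ n * s m₂ n ≤ s (m₁ + m₂ + 1) n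
  mul_le_cols : ∀ m n₁ n₂, s m n₁ * s m n₂ ≤ s m (n₁ + n₂ + 1)

noncomputable def gridRate (s : ℕ → ℕ → ℝ) (m n : ℕ) : ℝ :=
  s m n ^ ((1 : ℝ) / ((m + 1) * (n + 1)))

theorem gridRate_rpow {s : ℕ → ℕ → ℝ} {m n : ℕ} (h : 0 ≤ s m n) :
    gridRate s m n ^ (((m + 1) * (n + 1)) / (m * n) : ℝ) = s m n ^ ((1 : ℝ) / (m * n)) := by
  rw [gridRate, ← Real.rpow_mul h, div_mul_div_comm, one_mul, div_mul_cancel_left₀ (by positivity),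
    one_div]

namespace IsGridSupermultiplicative

variable {s : ℕ → ℕ → ℝ}

theorem swap (hs : IsGridSupermultiplicative s) :
    IsGridSupermultiplicative fun m n => s n m :=
  ⟨fun m n => hs.one_le n m, fun m₁ m₂ n => hs.mul_le_cols n m₁ m₂,
    fun m n₁ n₂ => hs.mul_le_rows n₁ n₂ m⟩

theorem nonneg (hs : IsGridSupermultiplicative s) (m n : ℕ) : 0 ≤ s m n :=
  zero_le_one.trans (hs.one_le m n)

theorem mono_left (hs : IsGridSupermultiplicative s) {m m' : ℕ} (n : ℕ) (h : m ≤ m') :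
    s m n ≤ s m' n := by
  obtain ⟨_ | d, rfl⟩ := Nat.exists_eq_add_of_le h
  · rfl
  · exact (le_mul_of_one_le_right (hs.nonneg m n) (hs.one_le d n)).trans (hs.mul_le_rows m d n)

theorem mono (hs : IsGridSupermultiplicative s) {m m' n n' : ℕ} (hm : m ≤ m') (hn : n ≤ n') :
    s m n ≤ s m' n' :=
  (hs.mono_left n hm).trans (hs.swap.mono_left m' hn)

theorem pow_succ_le_rows (hs : IsGridSupermultiplicative s) (m n k : ℕ) :
    s m n ^ (k + 1) ≤ s (k * (m + 1) + m) n := by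
  induction k with
  | zero => simp
  | succ k ih =>
    calc s m n ^ (k + 1 + 1) = s m n ^ (k + 1) * s m n := pow_succ _ _
      _ ≤ s (k * (m + 1) + m) n * s m n := mul_le_mul_of_nonneg_right ih (hs.nonneg m n)
      _ ≤ s (k * (m + 1) + m + m + 1) n := hs.mul_le_rows _ _ _
      _ = s ((k + 1) * (m + 1) + m) n := by ring_nf

theorem pow_div_mul_div_le (hs : IsGridSupermultiplicative s) (m₀ n₀ m n : ℕ) :
    s m₀ n₀ ^ ((m + 1) / (m₀ + 1) * ((n + 1) / (n₀ + 1))) ≤ s m n := by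
  have hK := Nat.div_mul_le_self (m + 1) (m₀ + 1)
  have hL := Nat.div_mul_le_self (n + 1) (n₀ + 1)
  generalize (m + 1) / (m₀ + 1) = K at hK ⊢
  generalize (n + 1) / (n₀ + 1) = L at hL ⊢
  obtain _ | k := K
  · simpa using hs.one_le m n
  obtain _ | l := L
  · simpa using hs.one_le m n
  calc s m₀ n₀ ^ ((k + 1) * (l + 1)) = (s m₀ n₀ ^ (k + 1)) ^ (l + 1) := pow_mul _ _ _
    _ ≤ s (k * (m₀ + 1) + m₀) n₀ ^ (l + 1) :=
        pow_le_pow_left₀ (pow_nonneg (hs.nonneg _ _) _) (hs.pow_succ_le_rows _ _ _) _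
    _ ≤ s (k * (m₀ + 1) + m₀) (l * (n₀ + 1) + n₀) := hs.swap.pow_succ_le_rows _ _ _
    _ ≤ s m n := hs.mono (by linarith) (by linarith)

theorem one_le_gridRate (hs : IsGridSupermultiplicative s) (m n : ℕ) : 1 ≤ gridRate s m n :=
  Real.one_le_rpow (hs.one_le m n) (by positivity)

theorem gridRate_le (hs : IsGridSupermultiplicative s) {C : ℝ}
    (hC : ∀ m n : ℕ, s m n ≤ C ^ ((m + 1) * (n + 1))) (m n : ℕ) : gridRate s m n ≤ C := by
  have hC₁ : 1 ≤ C := by simpa using (hs.one_le 0 0).trans (hC 0 0)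
  have hk : (((m + 1) * (n + 1) : ℕ) : ℝ) * (1 / ((m + 1) * (n + 1))) = 1 := by
    push_cast
    field_simp
  calc gridRate s m n ≤ (C ^ ((m + 1) * (n + 1))) ^ ((1 : ℝ) / ((m + 1) * (n + 1))) :=
        Real.rpow_le_rpow (hs.nonneg m n) (hC m n) (by positivity)
    _ = C := by
        rw [← Real.rpow_natCast, ← Real.rpow_mul (zero_le_one.trans hC₁), hk, Real.rpow_one]

theorem gridRate_rpow_le (hs : IsGridSupermultiplicative s) {m₀ n₀ m n : ℕ} (hn : n₀ ≤ n) :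
    gridRate s m₀ n₀ ^ (((m - m₀) * (n - n₀)) / (m * n) : ℝ) ≤ s m n ^ ((1 : ℝ) / (m * n)) := by
  set K := (m + 1) / (m₀ + 1)
  set L := (n + 1) / (n₀ + 1)
  have hK : (m : ℝ) - m₀ ≤ K * (m₀ + 1) := (sub_lt_add_one_div_add_one_mul m m₀).le
  have hL : (n : ℝ) - n₀ ≤ L * (n₀ + 1) := (sub_lt_add_one_div_add_one_mul n n₀).le
  calc gridRate s m₀ n₀ ^ (((m - m₀) * (n - n₀)) / (m * n) : ℝ)
      ≤ gridRate s m₀ n₀ ^ ((K * (m₀ + 1)) * (L * (n₀ + 1)) / (m * n) : ℝ) := by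
        refine Real.rpow_le_rpow_of_exponent_le (hs.one_le_gridRate m₀ n₀) ?_
        gcongr ?_ / _
        exact mul_le_mul hK hL (by simpa using hn) (by positivity)
    _ = (s m₀ n₀ ^ (K * L)) ^ ((1 : ℝ) / (m * n)) := by
        rw [gridRate, ← Real.rpow_mul (hs.nonneg m₀ n₀), ← Real.rpow_natCast,
          ← Real.rpow_mul (hs.nonneg m₀ n₀)]
        congr 1
        push_cast
        field_simp
    _ ≤ s m n ^ ((1 : ℝ) / (m * n)) :=
        Real.rpow_le_rpow (pow_nonneg (hs.nonneg m₀ n₀) _) (hs.pow_div_mul_div_le m₀ n₀ m n)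
          (by positivity)

theorem tendsto_rpow_one_div_mul (hs : IsGridSupermultiplicative s) {C : ℝ}
    (hC : ∀ m n : ℕ, s m n ≤ C ^ ((m + 1) * (n + 1))) :
    Tendsto (fun p : ℕ × ℕ => s p.1 p.2 ^ ((1 : ℝ) / (p.1 * p.2))) (atTop ×ˢ atTop)
      (𝓝 (sSup {x | ∃ m n : ℕ, 1 ≤ m ∧ 1 ≤ n ∧ x = gridRate s m n})) := by
  set R := {x | ∃ m n : ℕ, 1 ≤ m ∧ 1 ≤ n ∧ x = gridRate s m n}
  have hR : BddAbove R := ⟨C, by rintro _ ⟨m, n, -, -, rfl⟩; exact hs.gridRate_le hC m n⟩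
  have hR₁ : gridRate s 1 1 ∈ R := ⟨1, 1, le_rfl, le_rfl, rfl⟩
  refine tendsto_order.2 ⟨fun a ha => ?_, fun a ha => ?_⟩
  · obtain ⟨_, ⟨m₀, n₀, -, -, rfl⟩, hlt⟩ := exists_lt_of_lt_csSup ⟨_, hR₁⟩ ha
    have hlim : Tendsto (fun p : ℕ × ℕ =>
        gridRate s m₀ n₀ ^ (((p.1 - m₀) * (p.2 - n₀)) / (p.1 * p.2) : ℝ)) (atTop ×ˢ atTop)
        (𝓝 (gridRate s m₀ n₀)) := by
      simpa only [← sub_eq_add_neg, Real.rpow_one] using tendsto_const_nhds.rpow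
        (tendsto_natCast_add_mul_natCast_add_div_mul (-m₀) (-n₀)) (Or.inr one_pos)
    filter_upwards [hlim.eventually (lt_mem_nhds hlt),
      tendsto_snd.eventually (eventually_ge_atTop n₀)] with p hp hn
    exact hp.trans_le (hs.gridRate_rpow_le hn)
  · have hlim : Tendsto (fun p : ℕ × ℕ => sSup R ^ (((p.1 + 1) * (p.2 + 1)) / (p.1 * p.2) : ℝ))
        (atTop ×ˢ atTop) (𝓝 (sSup R)) := by
      simpa only [Real.rpow_one] using tendsto_const_nhds.rpow
        (tendsto_natCast_add_mul_natCast_add_div_mul 1 1) (Or.inr one_pos)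
    filter_upwards [hlim.eventually (gt_mem_nhds ha),
      tendsto_fst.eventually (eventually_ge_atTop 1),
      tendsto_snd.eventually (eventually_ge_atTop 1)] with p hp hm hn
    rw [← gridRate_rpow (hs.nonneg p.1 p.2)]
    exact (Real.rpow_le_rpow (zero_le_one.trans (hs.one_le_gridRate _ _))
      (le_csSup hR ⟨p.1, p.2, hm, hn, rfl⟩) (by positivity)).trans_lt hp

end IsGridSupermultiplicative

theorem isGridSupermultiplicative_numMIS_gridGraph :
    IsGridSupermultiplicative fun m n => (numMIS (gridGraph m n) : ℝ) where
  one_le m n := by exact_mod_cast one_le_numMIS _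
  mul_le_rows m₁ m₂ n := by exact_mod_cast numMIS_gridGraph_mul_le_rows m₁ m₂ n
  mul_le_cols m n₁ n₂ := by exact_mod_cast numMIS_gridGraph_mul_le_cols m n₁ n₂

theorem numMIS_gridGraph_le (m n : ℕ) :
    (numMIS (gridGraph m n) : ℝ) ≤ 2 ^ ((m + 1) * (n + 1)) := by
  have hcard : Nat.card (Fin m × Fin n) ≤ (m + 1) * (n + 1) := by
    rw [Nat.card_prod, Nat.card_fin, Nat.card_fin]
    exact Nat.mul_le_mul (Nat.le_succ m) (Nat.le_succ n)
  exact_mod_cast (numMIS_le_two_pow _).trans (Nat.pow_le_pow_right two_pos hcard)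

theorem maximal_hard_square_entropy :
    ∀ ε > (0 : ℝ), ∃ N : ℕ, ∀ m n : ℕ, N ≤ m → N ≤ n →
      |(numMIS (gridGraph m n) : ℝ) ^ ((1 : ℝ) / (m * n)) -
        sSup {x : ℝ | ∃ m' n' : ℕ, 1 ≤ m' ∧ 1 ≤ n' ∧
          x = (numMIS (gridGraph m' n') : ℝ) ^ ((1 : ℝ) / ((m' + 1) * (n' + 1)))}| < ε := by
  intro ε hε
  have h := isGridSupermultiplicative_numMIS_gridGraph.tendsto_rpow_one_div_mul numMIS_gridGraph_le
  rw [prod_atTop_atTop_eq] at h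
  exact eventually_atTop_prod_self.mp (h.eventually (Metric.ball_mem_nhds _ hε))
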